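/- arXiv:2308.09557 — 2 statements merged into one kernel-verified Lean document; each statement's English description precedes it below -/
import Mathlib

section
/- For any ideals I, J on ω: b_σ(I ⊗ J) ≥ min{b_σ(I), b_σ(J)}. -/
open Set

/-- `I` is an ideal on `α`: closed under subsets and finite unions,
contains all finite sets, does not contain the whole set. -/
def IsIdeal {α : Type*} (I : Set (Set α)) : Prop :=
  (∀ A B : Set α, A ⊆ B → B ∈ I → A ∈ I) ∧
  (∀ A B : Set α, A ∈ I → B ∈ I → A ∪ B ∈ I) ∧
  (∀ A : Set α, A.Finite → A ∈ I) ∧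
  Set.univ ∉ I

/-- `E` is a `⊆`-increasing sequence of members of `I` (the family `M_I`). -/
def MemM {α : Type*} (I : Set (Set α)) (E : ℕ → Set α) : Prop :=
  (∀ k, E k ∈ I) ∧ ∀ k, E k ⊆ E (k + 1)

/-- The cardinal `b_σ(I,J)`, with value `⊤` (i.e. `∞`) if no witness family exists. -/
noncomputable def bSigma {α : Type} (I J : Set (Set α)) : WithTop Cardinal :=
  sInf {c | ∃ E : Set (ℕ → Set α), (∀ e ∈ E, MemM I e) ∧
    (∀ A : ℕ → Set α, MemM J A → ∃ e ∈ E, {k | ¬ e k ⊆ A k}.Infinite) ∧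
    c = (Cardinal.mk E : WithTop Cardinal)}

/-- The cardinal `add_ω(I,J)`, with value `⊤` (i.e. `∞`) if no witness family exists. -/
noncomputable def addOmega {α : Type} (I J : Set (Set α)) : WithTop Cardinal :=
  sInf {c | ∃ A : Set (Set α), A ⊆ I ∧
    (∀ B : ℕ → Set α, (∀ n, B n ∈ J) → ∃ a ∈ A, ∀ n, ¬ a ⊆ B n) ∧
    c = (Cardinal.mk A : WithTop Cardinal)}

/-- The cardinal `add*(I)`, with value `⊤` (i.e. `∞`) if no witness family exists. -/
noncomputable def addStar {α : Type} (I : Set (Set α)) : WithTop Cardinal :=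
  sInf {c | ∃ A : Set (Set α), A ⊆ I ∧
    (∀ B ∈ I, ∃ a ∈ A, (a \ B).Infinite) ∧
    c = (Cardinal.mk A : WithTop Cardinal)}

/-- The cardinal `b_s(I,J,K)`, with value `⊤` (i.e. `∞`) if no witness family exists. -/
noncomputable def bS {α : Type} (I J K : Set (Set α)) : WithTop Cardinal :=
  sInf {c | ∃ E : Set (ℕ → Set α),
    (∀ e ∈ E, (∀ n, e n ∈ K) ∧ ∀ n k, n ≠ k → e n ∩ e k = ∅) ∧
    (∀ A : ℕ → Set α, (∀ n, A n ∈ J) → (∀ n k, n ≠ k → A n ∩ A k = ∅) →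
      (⋃ n, A n) = Set.univ →
      ∃ e ∈ E, (⋃ n, A (n + 1) ∩ ⋃ i ≤ n, e i) ∉ I) ∧
    c = (Cardinal.mk E : WithTop Cardinal)}

/-- The Fubini product `I ⊗ J` of two ideals on `ℕ`. -/
def fubini (I J : Set (Set ℕ)) : Set (Set (ℕ × ℕ)) :=
  {A | {n | {m | (n, m) ∈ A} ∉ J} ∈ I}

/-- The ideal `Fin` of finite subsets of `ℕ`. -/
def finIdeal : Set (Set ℕ) := {A | A.Finite}

/-- The bounding number `𝔟`: the least cardinality of a `≤*`-unbounded family in `ω^ω`. -/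
noncomputable def boundingNumber : Cardinal :=
  sInf {c | ∃ F : Set (ℕ → ℕ), Cardinal.mk F = c ∧
    ∀ g : ℕ → ℕ, ∃ f ∈ F, {n | g n < f n}.Infinite}

/-! Let `ℰ ⊆ M_{I ⊗ J}` have size below both `b_σ(I)` and `b_σ(J)`. Each `e ∈ ℰ` yields two
sequences: its sets of `J`-positive columns, in `M_I`, and the unions of its `J`-small columns
`(e_j)_n` with `n, j ≤ k`, in `M_J`. Choose `C ∈ M_I` and `B ∈ M_J` eventually dominating all
of these. Then `A_k = (C_k × ω) ∪ {(n, m) : m ∈ B_{max n k}}` lies in `M_{I ⊗ J}` and eventually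
contains every `e_k`, so `ℰ` does not witness `b_σ(I ⊗ J)`. -/

open Filter

theorem IsIdeal.biUnion_mem {α ι : Type*} {I : Set (Set α)} (hI : IsIdeal I) {s : Set ι}
    (hs : s.Finite) {f : ι → Set α} (hf : ∀ i ∈ s, f i ∈ I) : ⋃ i ∈ s, f i ∈ I := by
  induction s, hs using Set.Finite.induction_on with
  | empty => simpa using hI.2.2.1 ∅ finite_empty
  | @insert a s _ _ ih =>
    rw [biUnion_insert]
    exact hI.2.1 _ _ (hf a (mem_insert a s)) (ih fun i hi => hf i (mem_insert_of_mem a hi))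

theorem exists_eventually_subset_of_lt_bSigma {α β : Type} {I J : Set (Set α)}
    {E : Set (ℕ → Set β)} (f : (ℕ → Set β) → ℕ → Set α) (hf : ∀ e ∈ E, MemM I (f e))
    (hE : (Cardinal.mk E : WithTop Cardinal) < bSigma I J) :
    ∃ A, MemM J A ∧ ∀ e ∈ E, ∀ᶠ k in atTop, f e k ⊆ A k := by
  by_contra! h
  have himage : (Cardinal.mk (f '' E) : WithTop Cardinal) ≤ Cardinal.mk E := by
    exact_mod_cast Cardinal.mk_image_le
  refine hE.not_ge (le_trans (sInf_le ⟨f '' E, ?_, fun A hA => ?_, rfl⟩) himage)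
  · rintro _ ⟨e, he, rfl⟩
    exact hf e he
  · obtain ⟨e, he, hfe⟩ := h A hA
    exact ⟨f e, mem_image_of_mem f he, Nat.frequently_atTop_iff_infinite.1 hfe⟩

section Fubini

variable {I J : Set (Set ℕ)}

def largeColumns (J : Set (Set ℕ)) (e : ℕ → Set (ℕ × ℕ)) (k : ℕ) : Set ℕ :=
  {n | Prod.mk n ⁻¹' e k ∉ J}

def smallColumnsUnion (J : Set (Set ℕ)) (e : ℕ → Set (ℕ × ℕ)) (k : ℕ) : Set ℕ :=
  ⋃ p ∈ {p : ℕ × ℕ | p.1 ≤ k ∧ p.2 ≤ k ∧ Prod.mk p.1 ⁻¹' e p.2 ∈ J}, Prod.mk p.1 ⁻¹' e p.2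

def fubiniDominator (C B : ℕ → Set ℕ) (k : ℕ) : Set (ℕ × ℕ) :=
  {p | p.1 ∈ C k ∨ p.2 ∈ B (max p.1 k)}

theorem memM_largeColumns (hJ : IsIdeal J) {e : ℕ → Set (ℕ × ℕ)} (he : MemM (fubini I J) e) :
    MemM I (largeColumns J e) :=
  ⟨he.1, fun k _ hn hsmall => hn (hJ.1 _ _ (fun _ hm => he.2 k hm) hsmall)⟩

theorem memM_smallColumnsUnion (hJ : IsIdeal J) (e : ℕ → Set (ℕ × ℕ)) :
    MemM J (smallColumnsUnion J e) := by
  refine ⟨fun k => hJ.biUnion_mem ?_ fun p hp => hp.2.2, fun k => ?_⟩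
  · exact ((finite_Iic k).prod (finite_Iic k)).subset fun p hp => ⟨hp.1, hp.2.1⟩
  · exact biUnion_subset_biUnion_left fun p hp =>
      ⟨hp.1.trans k.le_succ, hp.2.1.trans k.le_succ, hp.2.2⟩

theorem column_subset_smallColumnsUnion {e : ℕ → Set (ℕ × ℕ)} {n k : ℕ}
    (hsmall : Prod.mk n ⁻¹' e k ∈ J) : Prod.mk n ⁻¹' e k ⊆ smallColumnsUnion J e (max n k) :=
  subset_biUnion_of_mem (u := fun p : ℕ × ℕ => Prod.mk p.1 ⁻¹' e p.2) (x := (n, k))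
    ⟨le_max_left n k, le_max_right n k, hsmall⟩

theorem memM_fubiniDominator (hI : IsIdeal I) {C B : ℕ → Set ℕ} (hC : MemM I C)
    (hB : MemM J B) : MemM (fubini I J) (fubiniDominator C B) := by
  refine ⟨fun k => hI.1 _ (C k) (fun n hn => ?_) (hC.1 k), fun k p hp => ?_⟩
  · by_contra hnC
    refine hn ?_
    convert hB.1 (max n k) using 1
    ext m
    simp [fubiniDominator, hnC]
  · exact hp.imp (fun h => hC.2 k h)
      (fun h => monotone_nat_of_le_succ hB.2 (max_le_max_left p.1 k.le_succ) h)

theorem eventually_subset_fubiniDominator {e : ℕ → Set (ℕ × ℕ)} {C B : ℕ → Set ℕ}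
    (hC : ∀ᶠ k in atTop, largeColumns J e k ⊆ C k)
    (hB : ∀ᶠ k in atTop, smallColumnsUnion J e k ⊆ B k) :
    ∀ᶠ k in atTop, e k ⊆ fubiniDominator C B k := by
  obtain ⟨k₀, hk₀⟩ := eventually_atTop.1 hB
  filter_upwards [hC, eventually_ge_atTop k₀] with k hCk hk
  rintro ⟨n, m⟩ hnm
  by_cases hn : n ∈ C k
  · exact Or.inl hn
  · have hsmall : Prod.mk n ⁻¹' e k ∈ J := by_contra fun h => hn (hCk h)
    exact Or.inr <|
      hk₀ _ (hk.trans (le_max_right n k)) (column_subset_smallColumnsUnion hsmall hnm)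

end Fubini

/-- `b_σ(I ⊗ J) ≥ min{b_σ(I), b_σ(J)}` for all ideals `I, J` on `ω`. -/
theorem stmt14 (I J : Set (Set ℕ)) (hI : IsIdeal I) (hJ : IsIdeal J) :
    min (bSigma I I) (bSigma J J) ≤ bSigma (fubini I J) (fubini I J) := by
  refine le_sInf ?_
  rintro _ ⟨E, hE, hunbdd, rfl⟩
  by_contra! hlt
  obtain ⟨C, hC, hCE⟩ := exists_eventually_subset_of_lt_bSigma (largeColumns J)
    (fun e he => memM_largeColumns hJ (hE e he)) (hlt.trans_le (min_le_left _ _))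
  obtain ⟨B, hB, hBE⟩ := exists_eventually_subset_of_lt_bSigma (smallColumnsUnion J)
    (fun e _ => memM_smallColumnsUnion hJ e) (hlt.trans_le (min_le_right _ _))
  obtain ⟨e, he, hinf⟩ := hunbdd _ (memM_fubiniDominator hI hC hB)
  obtain ⟨k, hk, hdom⟩ := ((Nat.frequently_atTop_iff_infinite.2 hinf).and_eventually
    (eventually_subset_fubiniDominator (hCE e he) (hBE e he))).exists
  exact hk hdom
end

section
/- add_ω(Fin ⊗ Fin) = 𝔟, where Fin ⊗ Fin = {A ⊆ ω×ω : all but finitely many vertical sections of A are finite}. -/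
open Set

/-!
Both directions compare sets in `Fin ⊗ Fin` with functions in `ω^ω`. A function `f` gives the
region `{(n, m) | m ≤ f n}` below its graph, which lies in `Fin ⊗ Fin`. Conversely, for
`B ∈ Fin ⊗ Fin`, picking a point outside the (cofinitely many finite) sections of `B` gives a
function `h_B` escaping `B`. Given countably many `B k`, one `g` eventually dominates every `h_{B k}`,
so if `f ≰* g` then the region below `f` is contained in no `B k`. In the other direction a set
`a ∈ Fin ⊗ Fin` gives the function `n ↦ sup (a)_n`. If `a` is not covered by any of the sets
`{(n, m) | n ≤ k ∨ m ≤ g n}`, that function is not `≤* g`.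
-/

open Filter

def IsOmegaUnbounded {α : Type} (J : Set (Set α)) (A : Set (Set α)) : Prop :=
  ∀ B : ℕ → Set α, (∀ n, B n ∈ J) → ∃ a ∈ A, ∀ n, ¬ a ⊆ B n

def IsUnbounded (F : Set (ℕ → ℕ)) : Prop :=
  ∀ g : ℕ → ℕ, ∃ f ∈ F, {n | g n < f n}.Infinite

section CardinalInvariants

variable {α : Type} {I J : Set (Set α)} {A : Set (Set α)}

theorem addOmega_le (hAI : A ⊆ I) (hA : IsOmegaUnbounded J A) :
    addOmega I J ≤ Cardinal.mk A :=
  sInf_le ⟨A, hAI, hA, rfl⟩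

theorem le_addOmega {c : WithTop Cardinal}
    (h : ∀ A ⊆ I, IsOmegaUnbounded J A → c ≤ Cardinal.mk A) : c ≤ addOmega I J :=
  le_sInf fun _ ⟨A, hAI, hA, hc⟩ => hc ▸ h A hAI hA

theorem isUnbounded_univ : IsUnbounded univ := fun g =>
  ⟨(g · + 1), mem_univ _, by simp [infinite_univ]⟩

theorem boundingNumber_le {F : Set (ℕ → ℕ)} (hF : IsUnbounded F) :
    boundingNumber ≤ Cardinal.mk F :=
  csInf_le' ⟨F, rfl, hF⟩

theorem exists_isUnbounded_mk_eq_boundingNumber :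
    ∃ F : Set (ℕ → ℕ), IsUnbounded F ∧ Cardinal.mk F = boundingNumber :=
  let ⟨F, hFc, hF⟩ := csInf_mem (⟨_, univ, rfl, isUnbounded_univ⟩ :
    {c | ∃ F : Set (ℕ → ℕ), Cardinal.mk F = c ∧ IsUnbounded F}.Nonempty)
  ⟨F, hF, hFc⟩

end CardinalInvariants

theorem mem_fubini_finIdeal_iff {A : Set (ℕ × ℕ)} :
    A ∈ fubini finIdeal finIdeal ↔ ∀ᶠ n in atTop, {m | (n, m) ∈ A}.Finite := by
  rw [← Nat.cofinite_eq_atTop, eventually_cofinite]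
  rfl

def belowGraph (f : ℕ → ℕ) : Set (ℕ × ℕ) := {p | p.2 ≤ f p.1}

theorem belowGraph_mem_fubini (f : ℕ → ℕ) : belowGraph f ∈ fubini finIdeal finIdeal :=
  mem_fubini_finIdeal_iff.2 (.of_forall fun n => finite_Iic (f n))

theorem exists_eventually_notMem_of_mem_fubini {B : Set (ℕ × ℕ)}
    (hB : B ∈ fubini finIdeal finIdeal) : ∃ h : ℕ → ℕ, ∀ᶠ n in atTop, (n, h n) ∉ B := by
  have escape : ∀ n, ∃ m, {m | (n, m) ∈ B}.Finite → (n, m) ∉ B := fun n =>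
    (em {m | (n, m) ∈ B}.Finite).elim
      (fun hfin => let ⟨m, hm⟩ := hfin.exists_notMem; ⟨m, fun _ => hm⟩)
      (fun hinf => ⟨0, fun hfin => absurd hfin hinf⟩)
  choose h hh using escape
  exact ⟨h, (mem_fubini_finIdeal_iff.1 hB).mono hh⟩

theorem exists_forall_eventually_le (h : ℕ → ℕ → ℕ) :
    ∃ g : ℕ → ℕ, ∀ k, ∀ᶠ n in atTop, h k n ≤ g n :=
  ⟨fun n => (Finset.range (n + 1)).sup (h · n), fun k => eventually_atTop.2
    ⟨k, fun _ hn => Finset.le_sup (f := (h · _)) (Finset.mem_range.2 (Nat.lt_succ_of_le hn))⟩⟩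

theorem IsUnbounded.isOmegaUnbounded_image_belowGraph {F : Set (ℕ → ℕ)} (hF : IsUnbounded F) :
    IsOmegaUnbounded (fubini finIdeal finIdeal) (belowGraph '' F) := by
  intro B hB
  choose h hh using fun k => exists_eventually_notMem_of_mem_fubini (hB k)
  obtain ⟨g, hg⟩ := exists_forall_eventually_le h
  obtain ⟨f, hfF, hgf⟩ := hF g
  refine ⟨belowGraph f, mem_image_of_mem _ hfF, fun k hsub => ?_⟩
  obtain ⟨n, hgf, hhg, hnB⟩ := ((Nat.frequently_atTop_iff_infinite.2 hgf).and_eventually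
    ((hg k).and (hh k))).exists
  exact hnB (hsub (show h k n ≤ f n by omega))

theorem setOf_fst_le_or_snd_le_mem_fubini (g : ℕ → ℕ) (k : ℕ) :
    {p : ℕ × ℕ | p.1 ≤ k ∨ p.2 ≤ g p.1} ∈ fubini finIdeal finIdeal :=
  mem_fubini_finIdeal_iff.2 <| (eventually_gt_atTop k).mono fun n hn =>
    (finite_Iic (g n)).subset fun _ hm => hm.resolve_left (not_le.2 hn)

theorem IsOmegaUnbounded.isUnbounded_image_sSup {A : Set (Set (ℕ × ℕ))}
    (hAI : A ⊆ fubini finIdeal finIdeal) (hA : IsOmegaUnbounded (fubini finIdeal finIdeal) A) :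
    IsUnbounded ((fun a n => sSup {m | (n, m) ∈ a}) '' A) := by
  intro g
  obtain ⟨a, haA, ha⟩ := hA _ (setOf_fst_le_or_snd_le_mem_fubini g)
  refine ⟨_, mem_image_of_mem _ haA, Nat.frequently_atTop_iff_infinite.1 ?_⟩
  have above : ∃ᶠ n in atTop, ∃ m, (n, m) ∈ a ∧ g n < m := frequently_atTop.2 fun k => by
    obtain ⟨p, hpa, hpB⟩ := not_subset.1 (ha k)
    simp only [mem_ofPred_eq, not_or, not_le] at hpB
    exact ⟨p.1, hpB.1.le, p.2, hpa, hpB.2⟩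
  exact (above.and_eventually (mem_fubini_finIdeal_iff.1 (hAI haA))).mono
    fun n ⟨⟨m, hm, hgm⟩, hfin⟩ => hgm.trans_le (le_csSup hfin.bddAbove hm)

/-- `add_ω(Fin ⊗ Fin) = 𝔟`. -/
theorem stmt15 :
    addOmega (fubini finIdeal finIdeal) (fubini finIdeal finIdeal)
      = (boundingNumber : WithTop Cardinal) := by
  apply le_antisymm
  · obtain ⟨F, hF, hFcard⟩ := exists_isUnbounded_mk_eq_boundingNumber
    calc addOmega (fubini finIdeal finIdeal) (fubini finIdeal finIdeal)
        ≤ Cardinal.mk (belowGraph '' F) :=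
          addOmega_le (image_subset_iff.2 fun f _ => belowGraph_mem_fubini f)
            hF.isOmegaUnbounded_image_belowGraph
      _ ≤ boundingNumber := by
          rw [← hFcard]
          exact_mod_cast Cardinal.mk_image_le
  · refine le_addOmega fun A hAI hA => ?_
    exact_mod_cast (boundingNumber_le (hA.isUnbounded_image_sSup hAI)).trans Cardinal.mk_image_le
end
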